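/- Let p, q, s ∈ ℝ with p ≠ 0, let (a_n)_{n≥0} be a real sequence, and let (a_n^k) satisfy a_n^0 = a_n and a_n^k = (p·n+q)·a_n^{k−1} + s·(n+1)·a_{n+1}^{k−1} for n ≥ 0, k ≥ 1. Then the exponential generating function of the final sequence satisfies Ā(t) = exp(q t) · a( (s/p)·(exp(p t) − 1) ) as formal power series in ℝ⟦t⟧, where the right-hand side is the product of the formal exponential exp(qt) with the formal substitution of the zero-constant-term series (s/p)(exp(pt) − 1) into the ordinary generating function a of the initial sequence. -/

import Mathlib

open PowerSeries

/-- Formal substitution of the power series `f` into the power series `g`: the series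
`g(f(t))`. For `f` with zero constant term (the case used here), the coefficient of `t^n`
in `g(f(t))` is `Σ_{k ≤ n} (coeff k g) · (coeff n (f^k))`. -/
noncomputable def substPS (f g : PowerSeries ℝ) : PowerSeries ℝ :=
  PowerSeries.mk fun n =>
    ∑ k ∈ Finset.range (n + 1), PowerSeries.coeff k g * PowerSeries.coeff n (f ^ k)

/-!
The recurrence says that row `k` of the array is `Lᵏ a` for the operator `L = (p x + s) ∂ₓ + q`
acting on `a(x) = Σ aₙ xⁿ`, so the exponential generating function of column `n` is the
coefficient `Bₙ(t)` of `xⁿ` in `exp(tL) a`. A first-order operator integrates along its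
characteristics: `exp(tL) a (x) = e^{qt} a(x e^{pt} + (s/p)(e^{pt} - 1))`. Instead of handling
bivariate series, we take the coefficients `Bₙ` of the right-hand side as candidates and check
`Bₙ' = (pn+q) Bₙ + s(n+1) Bₙ₊₁` and `Bₙ(0) = aₙ`; this system determines all Taylor coefficients
recursively, so `B₀` is the exponential generating function of the final sequence.
-/

open Nat

namespace PowerSeries

theorem derivative_rescale {R : Type*} [CommSemiring R] (c : R) (f : R⟦X⟧) :
    d⁄dX R (rescale c f) = c • rescale c (d⁄dX R f) := by
  ext n
  simp only [coeff_derivative, coeff_rescale, coeff_smul, smul_eq_mul, pow_succ]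
  ring

theorem constantCoeff_rescale {R : Type*} [CommSemiring R] (c : R) (f : R⟦X⟧) :
    constantCoeff (rescale c f) = constantCoeff f := by
  rw [← coeff_zero_eq_constantCoeff_apply, ← coeff_zero_eq_constantCoeff_apply, coeff_rescale,
    pow_zero, one_mul]

theorem derivative_rescale_exp {A : Type*} [CommRing A] [Algebra ℚ A] (c : A) :
    d⁄dX A (rescale c (exp A)) = c • rescale c (exp A) := by
  rw [derivative_rescale, derivative_exp]

theorem coeff_subst_of_constantCoeff_eq_zero {R : Type*} [CommRing R] {f : R⟦X⟧}
    (hf : constantCoeff f = 0) (g : R⟦X⟧) (n : ℕ) :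
    coeff n (g.subst f) = ∑ k ∈ Finset.range (n + 1), coeff k g * coeff n (f ^ k) := by
  rw [coeff_subst' (HasSubst.of_constantCoeff_zero' hf)]
  refine finsum_eq_sum_of_support_subset _ fun k hk => ?_
  rw [Finset.coe_range, Set.mem_Iio, Nat.lt_succ_iff]
  by_contra! hnk
  have hpow : coeff n (f ^ k) = 0 := coeff_of_lt_order n <|
    (le_order_pow_of_constantCoeff_eq_zero k hf).trans_lt' (by exact_mod_cast hnk)
  exact hk (by simp [hpow])

theorem constantCoeff_subst_of_constantCoeff_eq_zero {R : Type*} [CommRing R] {f : R⟦X⟧}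
    (hf : constantCoeff f = 0) (g : R⟦X⟧) : constantCoeff (g.subst f) = constantCoeff g := by
  simpa using coeff_subst_of_constantCoeff_eq_zero hf g 0

variable {K : Type*} [Field K] [CharZero K]

theorem eq_mk_div_factorial_of_derivative_eq {α β : ℕ → K} {a : ℕ → ℕ → K} {B : ℕ → K⟦X⟧}
    (hrec : ∀ n k, a n (k + 1) = α n * a n k + β n * a (n + 1) k)
    (hB : ∀ n, d⁄dX K (B n) = α n • B n + β n • B (n + 1))
    (h0 : ∀ n, constantCoeff (B n) = a n 0) (n : ℕ) :
    B n = mk fun k => a n k / k ! := by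
  ext k
  induction k generalizing n with
  | zero => simp [h0]
  | succ k ih =>
    have h := congrArg (coeff k) (hB n)
    rw [coeff_derivative, map_add, coeff_smul, coeff_smul, ih, ih, smul_eq_mul, smul_eq_mul,
      coeff_mk, coeff_mk] at h
    rw [coeff_mk, eq_div_of_mul_eq k.cast_add_one_ne_zero h, hrec, factorial_succ, cast_mul,
      cast_succ]
    field_simp

/-- The solution of `x' = p x + s`, `x(0) = 0`. -/
noncomputable def affineOrbit (p s : K) : K⟦X⟧ :=
  C (s / p) * (rescale p (exp K) - 1)

theorem constantCoeff_affineOrbit (p s : K) : constantCoeff (affineOrbit p s) = 0 := by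
  simp [affineOrbit, constantCoeff_rescale]

theorem derivative_affineOrbit {p : K} (hp : p ≠ 0) (s : K) :
    d⁄dX K (affineOrbit p s) = s • rescale p (exp K) := by
  rw [affineOrbit, ← smul_eq_C_mul, Derivation.map_smul, map_sub, derivative_rescale_exp,
    derivative_one, sub_zero, smul_smul, div_mul_cancel₀ s hp]

/-- The coefficient of `x ^ n` in `exp (q t) * g (x * exp (p t) + affineOrbit p s t)`, i.e. in the
flow of the vector field `(p x + s) ∂ₓ + q` started at `g`. -/
noncomputable def flowCoeff (p q s : K) (g : K⟦X⟧) (n : ℕ) : K⟦X⟧ :=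
  (n ! : K)⁻¹ • (rescale (p * n + q) (exp K) * ((d⁄dX K)^[n] g).subst (affineOrbit p s))

theorem flowCoeff_zero (p q s : K) (g : K⟦X⟧) :
    flowCoeff p q s g 0 = rescale q (exp K) * g.subst (affineOrbit p s) := by
  simp [flowCoeff]

theorem constantCoeff_flowCoeff (p q s : K) (g : K⟦X⟧) (n : ℕ) :
    constantCoeff (flowCoeff p q s g n) = coeff n g := by
  rw [flowCoeff, smul_eq_C_mul, map_mul, map_mul, constantCoeff_C, constantCoeff_rescale,
    constantCoeff_exp, constantCoeff_subst_of_constantCoeff_eq_zero (constantCoeff_affineOrbit p s),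
    ← coeff_zero_eq_constantCoeff_apply, coeff_iterate_derivative, one_ascFactorial, zero_add,
    one_mul, inv_mul_cancel_left₀ (cast_ne_zero.mpr n.factorial_ne_zero)]

theorem derivative_flowCoeff {p : K} (hp : p ≠ 0) (q s : K) (g : K⟦X⟧) (n : ℕ) :
    d⁄dX K (flowCoeff p q s g n) =
      (p * n + q) • flowCoeff p q s g n + (s * (n + 1)) • flowCoeff p q s g (n + 1) := by
  set Φ : ℕ → K⟦X⟧ := fun m => ((d⁄dX K)^[m] g).subst (affineOrbit p s)
  have hΦ : d⁄dX K (Φ n) = s • (Φ (n + 1) * rescale p (exp K)) := by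
    rw [derivative_subst (HasSubst.of_constantCoeff_zero' (constantCoeff_affineOrbit p s)),
      derivative_affineOrbit hp, ← Function.iterate_succ_apply' (d⁄dX K), mul_smul_comm]
  have hE : rescale (p * n + q) (exp K) * rescale p (exp K) =
      rescale (p * ↑(n + 1) + q) (exp K) := by
    rw [exp_mul_exp_eq_exp_add]
    congr 2
    push_cast
    ring
  have hc : C (s * (n + 1)) * C ((n + 1)! : K)⁻¹ = C s * C (n ! : K)⁻¹ := by
    rw [← map_mul, ← map_mul, factorial_succ, cast_mul, cast_succ]
    field_simp
  simp only [flowCoeff]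
  rw [Derivation.map_smul, Derivation.leibniz, hΦ, derivative_rescale_exp, ← hE]
  simp only [smul_eq_C_mul]
  linear_combination (-rescale (p * n + q) (exp K) * rescale p (exp K) * Φ (n + 1)) * hc

end PowerSeries

theorem substPS_eq_subst {f : ℝ⟦X⟧} (hf : constantCoeff f = 0) (g : ℝ⟦X⟧) :
    substPS f g = g.subst f := by
  ext n
  rw [substPS, coeff_mk, coeff_subst_of_constantCoeff_eq_zero hf]

/-- Theorem 2.13: if `a_n^k = (pn+q) a_n^{k-1} + s(n+1) a_{n+1}^{k-1}` with `p ≠ 0`,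
then the exponential generating function of the final sequence is
`exp(qt) · a((s/p)(exp(pt) - 1))`. -/
theorem egf_final_eq (p q s : ℝ) (hp : p ≠ 0) (a₀ : ℕ → ℝ) (a : ℕ → ℕ → ℝ)
    (h0 : ∀ n, a n 0 = a₀ n)
    (hrec : ∀ n k, a n (k + 1) =
      (p * (n : ℝ) + q) * a n k + s * ((n : ℝ) + 1) * a (n + 1) k) :
    PowerSeries.mk (fun k => a 0 k / k.factorial) =
      rescale q (exp ℝ) *
        substPS (PowerSeries.C (s / p) * (rescale p (exp ℝ) - 1))
          (PowerSeries.mk fun n => a₀ n) := by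
  have hflow := eq_mk_div_factorial_of_derivative_eq (α := fun n => p * n + q)
    (β := fun n => s * (n + 1)) hrec (derivative_flowCoeff hp q s (mk a₀))
    (fun n => by rw [constantCoeff_flowCoeff, coeff_mk, h0]) 0
  rw [← hflow, flowCoeff_zero, ← substPS_eq_subst (constantCoeff_affineOrbit p s)]
  rfl
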